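/- arXiv:2602.21131 — 5 statements merged into one kernel-verified Lean document; each statement's English description precedes it below -/
import Mathlib

section
/- Let $A \geq c_2 > c_1 > 0$ and set $\beta := (c_2 - c_1)/(A - c_1)$. Given real numbers $a_0, \ldots, a_{N-1}$ such that $\sum_{j=0}^{N-1} a_j \geq c_2 N$ and $a_j \leq A$ for every $0 \leq j < N$, there exist $\ell \geq \beta N$ and integers $1 \leq n_1 < \cdots < n_\ell \leq N$ such that $\sum_{j=n}^{n_i - 1} a_j \geq c_1 (n_i - n)$ for every $0 \leq n < n_i$ and every $i = 1, \ldots, \ell$. -/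
/-!
Let `S n = ∑_{j<n} (a j - c₁)`. Call `m` a record time of `S` if `S k ≤ S m` for all `k < m`;
these are exactly the times `m` at which every backward average `(a k + ⋯ + a (m-1)) / (m - k)`
is at least `c₁`. Since `S` increases by at most `A - c₁` per step and only a record time can
raise the running maximum of `S`, that maximum after `N` steps is at most `A - c₁` times the
number of record times in `[1, N]`. It is also at least `S N ≥ (c₂ - c₁) N`.
-/

open Finset

namespace Pliss

def IsRecord (s : ℕ → ℝ) (m : ℕ) : Prop := ∀ k < m, s k ≤ s m

open scoped Classical in
noncomputable def records (s : ℕ → ℝ) (n : ℕ) : Finset ℕ := {m ∈ Icc 1 n | IsRecord s m}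

variable {s : ℕ → ℝ}

theorem mem_records {m n : ℕ} : m ∈ records s n ↔ (1 ≤ m ∧ m ≤ n) ∧ IsRecord s m := by
  simp [records]

theorem records_mono : Monotone (records s) := fun _ _ hmn _ hm => by
  rw [mem_records] at hm ⊢
  exact ⟨⟨hm.1.1, hm.1.2.trans hmn⟩, hm.2⟩

theorem card_records_succ_of_isRecord {n : ℕ} (h : IsRecord s (n + 1)) :
    #(records s (n + 1)) = #(records s n) + 1 := by
  have hnew : n + 1 ∉ records s n := fun hmem => by simp [mem_records] at hmem
  have : records s (n + 1) = insert (n + 1) (records s n) := by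
    ext m
    rcases eq_or_ne m (n + 1) with rfl | hm
    · simp [mem_records, h]
    · simp only [mem_insert, hm, false_or, mem_records]
      have : m ≤ n + 1 ↔ m ≤ n := by omega
      rw [this]
  rw [this, card_insert_of_notMem hnew]

theorem le_card_records_mul {D : ℝ} (hD : 0 ≤ D) (h0 : s 0 = 0) {n : ℕ}
    (hstep : ∀ j < n, s (j + 1) ≤ s j + D) : ∀ k ≤ n, s k ≤ #(records s n) * D := by
  induction n with
  | zero =>
    intro k hk
    rw [Nat.le_zero.mp hk, h0]
    positivity
  | succ n ih =>
    have ih := ih fun j hj => hstep j (by omega)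
    have hmono : (#(records s n) : ℝ) * D ≤ #(records s (n + 1)) * D := by
      gcongr
      exact records_mono n.le_succ
    intro k hk
    rcases Nat.lt_or_eq_of_le hk with hk | rfl
    · exact (ih k (by omega)).trans hmono
    by_cases hrec : IsRecord s (n + 1)
    · rw [card_records_succ_of_isRecord hrec]
      push_cast
      linarith [hstep n n.lt_succ_self, ih n le_rfl]
    · obtain ⟨k, hk, hlt⟩ : ∃ k < n + 1, s (n + 1) < s k := by
        simpa [IsRecord] using hrec
      linarith [ih k (by omega)]

theorem isRecord_partialSums_iff {a : ℕ → ℝ} {c : ℝ} {m : ℕ} :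
    IsRecord (fun n => ∑ j ∈ range n, (a j - c)) m ↔
      ∀ k < m, c * ((m : ℝ) - k) ≤ ∑ j ∈ Ico k m, a j := by
  refine forall₂_congr fun k hk => ?_
  rw [← sub_nonneg, ← sum_Ico_eq_sub _ hk.le, sum_sub_distrib, sum_const, Nat.card_Ico,
    nsmul_eq_mul, Nat.cast_sub hk.le, sub_nonneg, mul_comm]

end Pliss

open Pliss

theorem pliss_lemma_general (A c₁ c₂ : ℝ) (hc₁₂ : c₁ < c₂) (hA : c₂ ≤ A)
    (N : ℕ) (a : ℕ → ℝ)
    (hsum : c₂ * N ≤ ∑ j ∈ Finset.range N, a j)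
    (hbd : ∀ j < N, a j ≤ A) :
    ∃ (ℓ : ℕ) (n : Fin ℓ → ℕ),
      ((c₂ - c₁) / (A - c₁)) * N ≤ (ℓ : ℝ) ∧
      StrictMono n ∧
      (∀ i, 1 ≤ n i ∧ n i ≤ N) ∧
      (∀ i, ∀ k < n i, c₁ * ((n i : ℝ) - (k : ℝ)) ≤ ∑ j ∈ Finset.Ico k (n i), a j) := by
  set S : ℕ → ℝ := fun n => ∑ j ∈ range n, (a j - c₁)
  have hAc : 0 < A - c₁ := by linarith
  have hstep : ∀ j < N, S (j + 1) ≤ S j + (A - c₁) := fun j hj => by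
    simp only [S, sum_range_succ]
    linarith [hbd j hj]
  have hSN : S N = ∑ j ∈ range N, a j - N * c₁ := by simp [S, sum_sub_distrib]
  set R := records S N
  have hcount : (c₂ - c₁) * N ≤ #R * (A - c₁) := by
    linarith [le_card_records_mul hAc.le (by simp [S]) hstep N le_rfl]
  have hmem (i : Fin #R) : R.orderEmbOfFin rfl i ∈ R := orderEmbOfFin_mem R rfl i
  refine ⟨#R, R.orderEmbOfFin rfl, ?_, (R.orderEmbOfFin rfl).strictMono,
    fun i => (mem_records.mp (hmem i)).1, fun i => ?_⟩
  · rwa [div_mul_eq_mul_div, div_le_iff₀ hAc]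
  · exact isRecord_partialSums_iff.mp (mem_records.mp (hmem i)).2

/-- **Pliss's lemma.** -/
theorem pliss_lemma (A c₁ c₂ : ℝ) (hc₁ : 0 < c₁) (hc₁₂ : c₁ < c₂) (hA : c₂ ≤ A)
    (N : ℕ) (a : ℕ → ℝ)
    (hsum : c₂ * N ≤ ∑ j ∈ Finset.range N, a j)
    (hbd : ∀ j < N, a j ≤ A) :
    ∃ (ℓ : ℕ) (n : Fin ℓ → ℕ),
      ((c₂ - c₁) / (A - c₁)) * N ≤ (ℓ : ℝ) ∧
      StrictMono n ∧
      (∀ i, 1 ≤ n i ∧ n i ≤ N) ∧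
      (∀ i, ∀ k < n i, c₁ * ((n i : ℝ) - (k : ℝ)) ≤ ∑ j ∈ Finset.Ico k (n i), a j) :=
  pliss_lemma_general A c₁ c₂ hc₁₂ hA N a hsum hbd
end

section
/- Let $m$ be a Borel probability measure on the circle $\mathbb{S}^1$. Define $Q(x) := \sup_{I \ni x} \frac{|I|}{m(I)}$, where the supremum runs over all arcs $I$ containing $x$ (with the convention that the ratio is $+\infty$ when $m(I) = 0$). Then $\log^+ Q \in L^1(m)$, i.e., $\int \max(\log Q(x), 0)\, dm(x) < \infty$. -/
/-
A point where the maximal ratio exceeds `t` lies in an arc `I` with `t · m(I) < |I|`. Finitely many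
such arcs can be thinned out to a subfamily covering the same set in which no point lies in three
arcs, because three arcs through a common point are covered by the one reaching furthest to the
left together with the one reaching furthest to the right. Since `{Q > t}` is, by Lindelöf, an
increasing union of finite unions of such arcs, `t · m {Q > t} ≤ 2 |𝕊¹| = 2`, and the
layer cake formula gives `∫ log⁺ Q dm ≤ ∫₀^∞ 2 e^{-s} ds = 2`.
-/

open MeasureTheory Metric
open scoped ENNReal

/-- The maximal ratio `|I|/m(I)` over arcs (balls) of the circle containing `x`:
with the convention that the ratio is `∞` when `m(I) = 0` (ENNReal division). -/
noncomputable def maxRatio (m : Measure (AddCircle (1 : ℝ))) (x : AddCircle (1 : ℝ)) : ℝ≥0∞ :=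
  ⨆ (c : AddCircle (1 : ℝ)) (r : ℝ) (_ : 0 < r) (_ : x ∈ ball c r),
    volume (ball c r) / m (ball c r)

open Set
open scoped Real

section Overlap

variable {α ι : Type*}

def OverlapLE (U : ι → Set α) (s : Finset ι) (k : ℕ) : Prop :=
  ∀ x, ∀ t ⊆ s, (∀ i ∈ t, x ∈ U i) → t.card ≤ k

theorem exists_subcover_overlapLE_two [DecidableEq ι] {U : ι → Set α}
    (hU : ∀ (t : Finset ι) (x : α), t.Nonempty → (∀ i ∈ t, x ∈ U i) →
      ∃ p ∈ t, ∃ q ∈ t, ∀ i ∈ t, U i ⊆ U p ∪ U q)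
    (s : Finset ι) {K : Set α} (hK : K ⊆ ⋃ i ∈ s, U i) :
    ∃ s' ⊆ s, K ⊆ ⋃ i ∈ s', U i ∧ OverlapLE U s' 2 := by
  induction s using Finset.strongInduction with
  | H s ih =>
  by_cases hred : ∃ j ∈ s, K ⊆ ⋃ i ∈ s.erase j, U i
  · obtain ⟨j, hj, hKj⟩ := hred
    obtain ⟨s', hs', hKs', hover⟩ := ih _ (Finset.erase_ssubset hj) hKj
    exact ⟨s', hs'.trans (Finset.erase_subset j s), hKs', hover⟩
  refine ⟨s, subset_rfl, hK, fun x t hts hxt => ?_⟩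
  -- `s` is a minimal cover; of three members through `x`, one other than `p`, `q` is redundant.
  by_contra! ht
  obtain ⟨p, hp, q, hq, hpq⟩ := hU t x (Finset.card_pos.mp (by omega)) hxt
  obtain ⟨k, hk, hkq⟩ := Finset.exists_mem_ne
    (by rw [Finset.card_erase_of_mem hp]; omega : 1 < (t.erase p).card) q
  obtain ⟨hkp, hkt⟩ := Finset.mem_erase.mp hk
  refine hred ⟨k, hts hkt, hK.trans (iUnion₂_subset fun i hi => ?_)⟩
  by_cases hik : i = k
  · subst hik
    exact (hpq i hkt).trans (union_subset
      (Finset.subset_set_biUnion_of_mem (Finset.mem_erase.mpr ⟨hkp.symm, hts hp⟩))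
      (Finset.subset_set_biUnion_of_mem (Finset.mem_erase.mpr ⟨hkq.symm, hts hq⟩)))
  · exact Finset.subset_set_biUnion_of_mem (Finset.mem_erase.mpr ⟨hik, hi⟩)

theorem sum_measure_le_of_overlapLE [MeasurableSpace α] (μ : Measure α) {U : ι → Set α}
    {s : Finset ι} (hU : ∀ i ∈ s, MeasurableSet (U i)) {k : ℕ} (h : OverlapLE U s k) :
    ∑ i ∈ s, μ (U i) ≤ k * μ univ := by
  classical
  have hcount : ∀ x, ∑ i ∈ s, (U i).indicator 1 x ≤ (k : ℝ≥0∞) := fun x => by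
    simp only [indicator_apply, Pi.one_apply, Finset.sum_boole]
    exact_mod_cast h x _ (Finset.filter_subset _ s) fun i hi => (Finset.mem_filter.mp hi).2
  calc ∑ i ∈ s, μ (U i) = ∑ i ∈ s, ∫⁻ x, (U i).indicator 1 x ∂μ :=
        Finset.sum_congr rfl fun i hi => (lintegral_indicator_one (hU i hi)).symm
    _ = ∫⁻ x, ∑ i ∈ s, (U i).indicator 1 x ∂μ :=
        (lintegral_finsetSum s fun i hi => measurable_const.indicator (hU i hi)).symm
    _ ≤ ∫⁻ _, (k : ℝ≥0∞) ∂μ := lintegral_mono hcount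
    _ = k * μ univ := lintegral_const _

end Overlap

namespace AddCircle

variable {T : ℝ}

theorem ball_coe_eq_image_Ioo (a r : ℝ) :
    ball (a : AddCircle T) r = ((↑) : ℝ → AddCircle T) '' Ioo (a - r) (a + r) := by
  ext z
  rw [mem_ball, dist_eq_norm, QuotientAddGroup.norm_lt_iff]
  constructor
  · rintro ⟨d, hd, hdr⟩
    rw [Real.norm_eq_abs, abs_lt] at hdr
    refine ⟨a + d, ⟨by linarith, by linarith⟩, ?_⟩
    rw [coe_add, hd, add_sub_cancel]
  · rintro ⟨y, hy, rfl⟩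
    refine ⟨y - a, coe_sub .., ?_⟩
    rw [Real.norm_eq_abs, abs_lt]
    exact ⟨by linarith [hy.1], by linarith [hy.2]⟩

/-- The witnesses are the arcs reaching furthest to the left and furthest to the right. -/
theorem exists_ball_union_ball_superset {ι : Type*} {s : Finset ι} (hs : s.Nonempty)
    {c : ι → AddCircle T} {r : ι → ℝ} {x : AddCircle T} (hx : ∀ i ∈ s, x ∈ ball (c i) (r i)) :
    ∃ p ∈ s, ∃ q ∈ s, ∀ i ∈ s, ball (c i) (r i) ⊆ ball (c p) (r p) ∪ ball (c q) (r q) := by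
  obtain ⟨x, rfl⟩ := QuotientAddGroup.mk_surjective x
  have hlift : ∀ i ∈ s, ∃ a : ℝ, (a : AddCircle T) = c i ∧ x ∈ Ioo (a - r i) (a + r i) := by
    intro i hi
    have hci : c i ∈ ball (x : AddCircle T) (r i) := mem_ball_comm.mp (hx i hi)
    rw [ball_coe_eq_image_Ioo] at hci
    obtain ⟨a, ha, hac⟩ := hci
    exact ⟨a, hac, by linarith [ha.2], by linarith [ha.1]⟩
  choose! a hac hxa using hlift
  obtain ⟨p, hp, hpmin⟩ := s.exists_min_image (fun i => a i - r i) hs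
  obtain ⟨q, hq, hqmax⟩ := s.exists_max_image (fun i => a i + r i) hs
  refine ⟨p, hp, q, hq, fun i hi => ?_⟩
  rw [← hac i hi, ← hac p hp, ← hac q hq, ball_coe_eq_image_Ioo, ball_coe_eq_image_Ioo,
    ball_coe_eq_image_Ioo, ← image_union]
  exact image_mono (Ioo_subset_Ioo_union_Ioo (hpmin i hi)
    ((hxa q hq).1.trans (hxa p hp).2) (hqmax i hi))

theorem mul_measure_biUnion_ball_le [Fact (0 < T)] (μ : Measure (AddCircle T)) {ι : Type*}
    (s : Finset ι) (c : ι → AddCircle T) (r : ι → ℝ) {t : ℝ≥0∞}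
    (h : ∀ i ∈ s, t * μ (ball (c i) (r i)) ≤ volume (ball (c i) (r i))) :
    t * μ (⋃ i ∈ s, ball (c i) (r i)) ≤ 2 * ENNReal.ofReal T := by
  classical
  obtain ⟨s', hs's, hcover, hover⟩ := exists_subcover_overlapLE_two
    (fun t _ ht hx => exists_ball_union_ball_superset ht hx) s subset_rfl
  calc t * μ (⋃ i ∈ s, ball (c i) (r i)) ≤ t * ∑ i ∈ s', μ (ball (c i) (r i)) := by
        gcongr
        exact (measure_mono hcover).trans (measure_biUnion_finset_le _ _)
    _ = ∑ i ∈ s', t * μ (ball (c i) (r i)) := Finset.mul_sum _ _ _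
    _ ≤ ∑ i ∈ s', volume (ball (c i) (r i)) := Finset.sum_le_sum fun i hi => h i (hs's hi)
    _ ≤ 2 * volume univ := sum_measure_le_of_overlapLE volume (fun _ _ => measurableSet_ball) hover
    _ = 2 * ENNReal.ofReal T := by rw [AddCircle.measure_univ]

end AddCircle

section WeakType

variable {α : Type*} [MeasurableSpace α] {μ : Measure α} {f : α → ℝ≥0∞} {C : ℝ≥0∞}

theorem ae_lt_top_of_forall_mul_measure_lt_le (hC : C ≠ ⊤)
    (h : ∀ t, t * μ {x | t < f x} ≤ C) : ∀ᵐ x ∂μ, f x < ⊤ := by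
  set S := {x | f x = ⊤}
  have hn : ∀ n : ℕ, (n : ℝ≥0∞) * μ S ≤ C := fun n => by
    refine le_trans ?_ (h n)
    gcongr
    intro x (hx : f x = ⊤)
    simp [hx, ENNReal.natCast_lt_top]
  have htop : (⨆ n : ℕ, (n : ℝ≥0∞)) * μ S ≤ C := by
    rw [ENNReal.iSup_mul]; exact iSup_le hn
  rw [ENNReal.iSup_natCast] at htop
  simp only [ae_iff, lt_top_iff_ne_top, not_not]
  by_contra h0
  exact hC (top_le_iff.mp (ENNReal.top_mul h0 ▸ htop))

theorem ENNReal.ofReal_exp_lt_of_lt_posLog {s : ℝ} {y : ℝ≥0∞} (hs : 0 ≤ s)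
    (h : s < log⁺ y.toReal) : ENNReal.ofReal (Real.exp s) < y := by
  have hlog : s < Real.log y.toReal := (lt_max_iff.mp h).resolve_left hs.not_gt
  have hy : 0 < y.toReal := by
    by_contra! hy
    rw [le_antisymm hy ENNReal.toReal_nonneg, Real.log_zero] at hlog
    linarith
  calc ENNReal.ofReal (Real.exp s) < ENNReal.ofReal y.toReal :=
        (ENNReal.ofReal_lt_ofReal_iff hy).mpr ((Real.lt_log_iff_exp_lt hy).mp hlog)
    _ ≤ y := ENNReal.ofReal_toReal_le

/-- Layer cake, with the tail bound `μ {log⁺ f > s} ≤ C e^{-s}`. -/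
theorem lintegral_ofReal_log_toReal_le (hf : Measurable f)
    (h : ∀ t, t * μ {x | t < f x} ≤ C) :
    ∫⁻ x, ENNReal.ofReal (Real.log (f x).toReal) ∂μ ≤ C := by
  have htail : ∀ s ∈ Ioi (0 : ℝ),
      μ {x | s < log⁺ (f x).toReal} ≤ C * ENNReal.ofReal (Real.exp (-s)) := by
    intro s hs
    have hexp : ENNReal.ofReal (Real.exp s) ≠ 0 := by simp [Real.exp_pos]
    calc μ {x | s < log⁺ (f x).toReal}
        ≤ μ {x | ENNReal.ofReal (Real.exp s) < f x} :=
          measure_mono fun x hx => ENNReal.ofReal_exp_lt_of_lt_posLog (le_of_lt hs) hx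
      _ ≤ C / ENNReal.ofReal (Real.exp s) :=
          (ENNReal.le_div_iff_mul_le (Or.inl hexp) (Or.inl ENNReal.ofReal_ne_top)).mpr
            (by rw [mul_comm]; exact h _)
      _ = C * ENNReal.ofReal (Real.exp (-s)) := by
          rw [div_eq_mul_inv, ← ENNReal.ofReal_inv_of_pos (Real.exp_pos s), Real.exp_neg]
  calc ∫⁻ x, ENNReal.ofReal (Real.log (f x).toReal) ∂μ
      = ∫⁻ x, ENNReal.ofReal (log⁺ (f x).toReal) ∂μ := by
        simp only [Real.posLog, ENNReal.ofReal_max, ENNReal.ofReal_zero, zero_le, sup_of_le_right]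
    _ = ∫⁻ s in Ioi 0, μ {x | s < log⁺ (f x).toReal} :=
        lintegral_eq_lintegral_meas_lt μ (.of_forall fun _ => Real.posLog_nonneg)
          (by fun_prop)
    _ ≤ ∫⁻ s in Ioi 0, C * ENNReal.ofReal (Real.exp (-s)) :=
        setLIntegral_mono (by fun_prop) htail
    _ = C * ENNReal.ofReal (∫ s in Ioi 0, Real.exp (-s)) := by
        rw [lintegral_const_mul _ (by fun_prop), ofReal_integral_eq_lintegral_ofReal
          (integrableOn_exp_neg_Ioi 0) (.of_forall fun _ => (Real.exp_pos _).le)]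
    _ = C := by rw [integral_exp_neg_Ioi_zero, ENNReal.ofReal_one, mul_one]

end WeakType

theorem lt_maxRatio_iff {m : Measure (AddCircle (1 : ℝ))} {t : ℝ≥0∞} {x : AddCircle (1 : ℝ)} :
    t < maxRatio m x ↔
      ∃ c r, 0 < r ∧ x ∈ ball c r ∧ t < volume (ball c r) / m (ball c r) := by
  simp only [maxRatio, lt_iSup_iff, exists_prop]

theorem lowerSemicontinuous_maxRatio (m : Measure (AddCircle (1 : ℝ))) :
    LowerSemicontinuous (maxRatio m) := by
  refine lowerSemicontinuous_iff_isOpen_preimage.mpr fun t =>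
    isOpen_iff_forall_mem_open.mpr fun x hx => ?_
  obtain ⟨c, r, hr, hx, ht⟩ := lt_maxRatio_iff.mp hx
  exact ⟨ball c r, fun y hy => lt_maxRatio_iff.mpr ⟨c, r, hr, hy, ht⟩, isOpen_ball, hx⟩

theorem mul_measure_lt_maxRatio_le (m : Measure (AddCircle (1 : ℝ))) (t : ℝ≥0∞) :
    t * m {x | t < maxRatio m x} ≤ 2 := by
  let B : AddCircle (1 : ℝ) × ℝ → Set (AddCircle (1 : ℝ)) := fun p => ball p.1 p.2
  let P := {p | 0 < p.2 ∧ t < volume (B p) / m (B p)}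
  have hU : {x | t < maxRatio m x} = ⋃ p ∈ P, B p := by
    ext x
    simp only [lt_maxRatio_iff, mem_ofPred_eq, mem_iUnion, exists_prop, Prod.exists, B, P]
    exact exists₂_congr fun c r => by tauto
  obtain ⟨S, hSP, hSc, hS⟩ :=
    TopologicalSpace.isOpen_biUnion_countable P B fun _ _ => isOpen_ball
  have := hSc.to_subtype
  have hmono : Monotone fun F : Finset S => ⋃ p ∈ F, B p := fun F G hFG =>
    biUnion_subset_biUnion_left hFG
  rw [hU, ← hS, biUnion_eq_iUnion, iUnion_eq_iUnion_finset, hmono.measure_iUnion,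
    ENNReal.mul_iSup]
  refine iSup_le fun F => ?_
  have := AddCircle.mul_measure_biUnion_ball_le m F (fun p => p.1.1) (fun p => p.1.2)
    fun p _ => ENNReal.mul_le_of_le_div (hSP p.2).2.le
  simpa using this

theorem logPos_maxRatio_integrable_general (m : Measure (AddCircle (1 : ℝ))) :
    (∀ᵐ x ∂m, maxRatio m x < ⊤) ∧
    (∫⁻ x, ENNReal.ofReal (Real.log ((maxRatio m x).toReal)) ∂m) < ⊤ :=
  ⟨ae_lt_top_of_forall_mul_measure_lt_le ENNReal.ofNat_ne_top (mul_measure_lt_maxRatio_le m),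
    (lintegral_ofReal_log_toReal_le (lowerSemicontinuous_maxRatio m).measurable
      (mul_measure_lt_maxRatio_le m)).trans_lt ENNReal.ofNat_lt_top⟩

/-- `log⁺` of the maximal ratio of arc-length to measure is `m`-integrable:
in particular `Q < ∞` a.e. and `∫ log⁺ Q dm < ∞`. -/
theorem logPos_maxRatio_integrable (m : Measure (AddCircle (1 : ℝ)))
    [IsProbabilityMeasure m] :
    (∀ᵐ x ∂m, maxRatio m x < ⊤) ∧
    (∫⁻ x, ENNReal.ofReal (Real.log ((maxRatio m x).toReal)) ∂m) < ⊤ :=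
  logPos_maxRatio_integrable_general m
end

section
/- Let $\nu$ be a finite Borel measure on $[0,1]$ and $0 < a < 1$. Then for Lebesgue-almost every $t \in [0,1]$, the series $\sum_{k=1}^{\infty} \nu((t - a^k, t + a^k))$ converges. -/
open MeasureTheory Set Metric
open scoped ENNReal

/-!
By Fubini, `∫ ν(B(t, r)) dt = vol(B(0, r)) · ν(ℝ)`, both sides being the product measure of the strip `|x - t| < r`
in the product. With radii `aᵏ` these integrals are summable, so by monotone convergence
`t ↦ ∑ₖ ν(B(t, aᵏ))` is integrable, hence finite almost everywhere.
-/

section Balls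

variable {E : Type*} [SeminormedAddCommGroup E] [MeasurableSpace E] [BorelSpace E]

theorem measure_ball_eq_measure_ball_zero (μ : Measure E) [μ.IsAddLeftInvariant] (x : E) (r : ℝ) :
    μ (ball x r) = μ (ball 0 r) := by
  rw [← measure_preimage_add μ x, preimage_add_ball, sub_self]

variable [SecondCountableTopology E]

theorem measurableSet_dist_lt (r : ℝ) : MeasurableSet {p : E × E | dist p.2 p.1 < r} :=
  (isOpen_lt (continuous_snd.dist continuous_fst) continuous_const).measurableSet

theorem measurable_measure_ball (ν : Measure E) [SFinite ν] (r : ℝ) :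
    Measurable fun x => ν (ball x r) :=
  measurable_measure_prodMk_left (measurableSet_dist_lt r)

theorem lintegral_measure_ball (μ ν : Measure E) [μ.IsAddLeftInvariant] [SFinite μ] [SFinite ν]
    (r : ℝ) :
    ∫⁻ x, ν (ball x r) ∂μ = μ (ball 0 r) * ν univ := by
  have hs := measurableSet_dist_lt (E := E) r
  calc ∫⁻ x, ν (ball x r) ∂μ = μ.prod ν {p | dist p.2 p.1 < r} := (Measure.prod_apply hs).symm
    _ = ∫⁻ y, μ (ball y r) ∂ν := by
      rw [Measure.prod_apply_symm hs]
      congr 1 with y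
      congr 1 with x
      exact mem_ball'.symm
    _ = μ (ball 0 r) * ν univ := by
      simp_rw [measure_ball_eq_measure_ball_zero μ]
      exact lintegral_const _

theorem ae_summable_measure_ball (μ ν : Measure E) [μ.IsAddLeftInvariant] [SFinite μ]
    [IsFiniteMeasure ν] {r : ℕ → ℝ} (hr : ∑' k, μ (ball 0 (r k)) ≠ ∞) :
    ∀ᵐ x ∂μ, Summable fun k => (ν (ball x (r k))).toReal := by
  have hmeas : ∀ k, Measurable fun x => ν (ball x (r k)) := fun k => measurable_measure_ball ν _
  have hint : ∫⁻ x, ∑' k, ν (ball x (r k)) ∂μ ≠ ∞ := by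
    rw [lintegral_tsum fun k => (hmeas k).aemeasurable]
    simp_rw [lintegral_measure_ball, ENNReal.tsum_mul_right]
    exact ENNReal.mul_ne_top hr (measure_ne_top ν univ)
  filter_upwards [ae_lt_top (Measurable.tsum hmeas) hint] with x hx
  exact ENNReal.summable_toReal hx.ne

end Balls

theorem summable_measure_shrinking_balls_general (ν : Measure ℝ) [IsFiniteMeasure ν]
    (a : ℝ) (ha0 : 0 < a) (ha1 : a < 1) :
    ∀ᵐ t ∂(volume.restrict (Set.Icc (0 : ℝ) 1)),
      Summable fun k : ℕ => (ν (Set.Ioo (t - a ^ (k + 1)) (t + a ^ (k + 1)))).toReal := by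
  have hgeom : Summable fun k : ℕ => 2 * a ^ (k + 1) := by
    simpa only [pow_succ, mul_assoc] using
      ((summable_geometric_of_lt_one ha0.le ha1).mul_right a).mul_left 2
  have hvol : ∑' k : ℕ, volume (ball (0 : ℝ) (a ^ (k + 1))) ≠ ∞ := by
    simp_rw [Real.volume_ball]
    rw [← ENNReal.ofReal_tsum_of_nonneg (fun k => by positivity) hgeom]
    exact ENNReal.ofReal_ne_top
  refine ae_restrict_of_ae ?_
  simpa only [Real.ball_eq_Ioo] using ae_summable_measure_ball volume ν hvol

/-- For a finite Borel measure `ν` on `[0,1]` and `0 < a < 1`, for Lebesgue-a.e.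
`t ∈ [0,1]` the series `∑ₖ ν((t - aᵏ, t + aᵏ))` converges. -/
theorem summable_measure_shrinking_balls (ν : Measure ℝ) [IsFiniteMeasure ν]
    (hsupp : ν ((Set.Icc (0 : ℝ) 1)ᶜ) = 0)
    (a : ℝ) (ha0 : 0 < a) (ha1 : a < 1) :
    ∀ᵐ t ∂(volume.restrict (Set.Icc (0 : ℝ) 1)),
      Summable fun k : ℕ => (ν (Set.Ioo (t - a ^ (k + 1)) (t + a ^ (k + 1)))).toReal :=
  summable_measure_shrinking_balls_general ν a ha0 ha1
end

section
/- Let $(\Omega, P)$ be a probability space and $X, Y, Z$ random variables with values in standard Borel spaces. Say two random variables $U, V$ are quasi-independent if the joint distribution of $(U,V)$ is mutually absolutely continuous with the product of the marginal distributions. Assume: (1) $X$ and $Y$ are quasi-independent conditionally on $Z$ (i.e., for a.e. value $z$ of $Z$, $X$ and $Y$ are quasi-independent under the conditional law given $Z = z$); (2) $X$ and $Z$ are quasi-independent conditionally on $Y$; and (3) $Y$ and $Z$ are quasi-independent. Then the joint distribution of $(X, Y, Z)$ is mutually absolutely continuous with the product of the three marginal distributions. -/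
/-!
Conditional quasi-independence of `X` and `Y` given `Z` says that, up to null sets, the law of
`((Z, Y), X)` is `law(Z, Y) ⊗ P_{X | Z}`: conditioning `X` on `Y` as well changes nothing.
Symmetrically, `law((Y, Z), X)` is equivalent to `law(Y, Z) ⊗ P_{X | Y}`. As `law(Y, Z)` is
equivalent to `P_Y ⊗ P_Z`, the measures `P_{X | Z = z}` and `P_{X | Y = y}` are equivalent for
`P_Y ⊗ P_Z`-a.e. `(y, z)`; fixing a good `y` (Fubini) shows that `P_{X | Z = z}` is a.e.
equivalent to one measure, hence to its average `P_X`. So `law((Y, Z), X)` is equivalent to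
`P_Y ⊗ P_Z ⊗ P_X`.
-/

open MeasureTheory ProbabilityTheory

/-- Two (joint/product) laws are *quasi-independent* when they are mutually
absolutely continuous. -/
def MutuallyAC {α : Type*} [MeasurableSpace α] (ρ σ : Measure α) : Prop :=
  ρ ≪ σ ∧ σ ≪ ρ

namespace MutuallyAC

variable {α β : Type*} [MeasurableSpace α] [MeasurableSpace β] {μ ν ρ : Measure α}

lemma symm (h : MutuallyAC μ ν) : MutuallyAC ν μ := ⟨h.2, h.1⟩

lemma trans (h : MutuallyAC μ ν) (h' : MutuallyAC ν ρ) : MutuallyAC μ ρ :=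
  ⟨h.1.trans h'.1, h'.2.trans h.2⟩

lemma map (h : MutuallyAC μ ν) {f : α → β} (hf : Measurable f) :
    MutuallyAC (μ.map f) (ν.map f) :=
  ⟨h.1.map hf, h.2.map hf⟩

lemma compProd_left [SFinite μ] [SFinite ν] (h : MutuallyAC μ ν) (κ : Kernel α β) :
    MutuallyAC (μ ⊗ₘ κ) (ν ⊗ₘ κ) :=
  ⟨h.1.compProd_left κ, h.2.compProd_left κ⟩

lemma compProd_right [SFinite μ] {κ η : Kernel α β} [IsSFiniteKernel κ] [IsSFiniteKernel η]
    (h : ∀ᵐ a ∂μ, MutuallyAC (κ a) (η a)) :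
    MutuallyAC (μ ⊗ₘ κ) (μ ⊗ₘ η) :=
  ⟨.compProd_right (h.mono fun _ ha => ha.1), .compProd_right (h.mono fun _ ha => ha.2)⟩

lemma kernel_of_compProd [SFinite μ] [MeasurableSpace.CountableOrCountablyGenerated α β]
    {κ η : Kernel α β} [IsFiniteKernel κ] [IsFiniteKernel η]
    (h : MutuallyAC (μ ⊗ₘ κ) (μ ⊗ₘ η)) :
    ∀ᵐ a ∂μ, MutuallyAC (κ a) (η a) := by
  filter_upwards [h.1.kernel_of_compProd, h.2.kernel_of_compProd] with a h₁ h₂ using ⟨h₁, h₂⟩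

lemma comp_of_ae [IsProbabilityMeasure μ] {κ : Kernel α β} [IsSFiniteKernel κ] {σ : Measure β}
    [SFinite σ] (h : ∀ᵐ a ∂μ, MutuallyAC (κ a) σ) :
    MutuallyAC (κ ∘ₘ μ) σ := by
  have h' := (compProd_right (η := Kernel.const α σ) h).map measurable_snd
  rwa [Measure.compProd_const, ← Measure.snd, ← Measure.snd, Measure.snd_compProd,
    Measure.snd_prod] at h'

end MutuallyAC

section Rearrangement

variable {A B C : Type*} [MeasurableSpace A] [MeasurableSpace B] [MeasurableSpace C]

lemma map_compProd_prod_eq_compProd_prodMkRight (μ : Measure A) [IsFiniteMeasure μ]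
    (κ : Kernel A B) (η : Kernel A C) [IsFiniteKernel κ] [IsFiniteKernel η] :
    (μ ⊗ₘ (κ ×ₖ η)).map (fun p => ((p.1, p.2.2), p.2.1)) =
      μ ⊗ₘ η ⊗ₘ Kernel.prodMkRight C κ := by
  have hr : Measurable fun p : A × B × C => ((p.1, p.2.2), p.2.1) := by fun_prop
  refine Measure.ext_prod₃_iff'.2 fun {s t u} hs ht hu => ?_
  have hpre : (fun p : A × B × C => ((p.1, p.2.2), p.2.1)) ⁻¹' ((s ×ˢ t) ×ˢ u) =
      s ×ˢ u ×ˢ t := by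
    ext; simp only [Set.mem_preimage, Set.mem_prod]; tauto
  rw [Measure.map_apply hr ((hs.prod ht).prod hu), hpre,
    Measure.compProd_apply_prod hs (hu.prod ht), Measure.compProd_apply_prod (hs.prod ht) hu,
    Measure.setLIntegral_compProd ((Kernel.prodMkRight C κ).measurable_coe hu) hs ht]
  simp only [Kernel.prod_apply, Measure.prod_prod, Kernel.prodMkRight_apply, setLIntegral_const]

lemma map_prodMap_swap_compProd (μ : Measure (A × B)) [IsFiniteMeasure μ]
    (κ : Kernel (A × B) C) [IsFiniteKernel κ] :
    (μ ⊗ₘ κ).map (Prod.map Prod.swap id) = μ.map Prod.swap ⊗ₘ κ.swapLeft := by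
  have hm : Measurable (Prod.map (Prod.swap : A × B → B × A) (id : C → C)) := by fun_prop
  refine Measure.ext_prod fun {s t} hs ht => ?_
  rw [Measure.map_apply hm (hs.prod ht), Set.preimage_prod_map_prod, Set.preimage_id,
    Measure.compProd_apply_prod (hs.preimage measurable_swap) ht,
    Measure.compProd_apply_prod hs ht,
    setLIntegral_map hs (κ.swapLeft.measurable_coe ht) measurable_swap]
  rfl

end Rearrangement

section CondQuasiIndep

variable {Ω α β γ : Type*} [MeasurableSpace Ω] [MeasurableSpace α] [MeasurableSpace β]
  [MeasurableSpace γ] [StandardBorelSpace α] [Nonempty α] [StandardBorelSpace β] [Nonempty β]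

def CondQuasiIndep (X : Ω → α) (Y : Ω → β) (Z : Ω → γ) (P : Measure Ω) [IsFiniteMeasure P] :
    Prop :=
  ∀ᵐ z ∂(P.map Z),
    MutuallyAC (condDistrib (fun ω => (X ω, Y ω)) Z P z)
      (((condDistrib (fun ω => (X ω, Y ω)) Z P z).map Prod.fst).prod
        ((condDistrib (fun ω => (X ω, Y ω)) Z P z).map Prod.snd))

lemma CondQuasiIndep.mutuallyAC_compProd_condDistrib {P : Measure Ω} [IsFiniteMeasure P]
    {X : Ω → α} {Y : Ω → β} {Z : Ω → γ} (hX : Measurable X) (hY : Measurable Y)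
    (hZ : Measurable Z) (h : CondQuasiIndep X Y Z P) :
    MutuallyAC (P.map fun ω => ((Z ω, Y ω), X ω))
      (P.map (fun ω => (Z ω, Y ω)) ⊗ₘ Kernel.prodMkRight β (condDistrib X Z P)) := by
  have hXY : Measurable fun ω => (X ω, Y ω) := hX.prodMk hY
  have hfiber : ∀ᵐ z ∂(P.map Z), MutuallyAC (condDistrib (fun ω => (X ω, Y ω)) Z P z)
      ((condDistrib X Z P ×ₖ condDistrib Y Z P) z) := by
    filter_upwards [h, condDistrib_comp Z hXY.aemeasurable measurable_fst,
      condDistrib_comp Z hXY.aemeasurable measurable_snd] with z hz hzX hzY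
    rw [Kernel.prod_apply, show condDistrib X Z P z = _ from hzX,
      show condDistrib Y Z P z = _ from hzY, Kernel.map_apply _ measurable_fst,
      Kernel.map_apply _ measurable_snd]
    exact hz
  have hr : Measurable fun p : γ × α × β => ((p.1, p.2.2), p.2.1) := by fun_prop
  have h' := (MutuallyAC.compProd_right hfiber).map hr
  rwa [compProd_map_condDistrib hXY.aemeasurable, Measure.map_map hr (hZ.prodMk hXY),
    map_compProd_prod_eq_compProd_prodMkRight, compProd_map_condDistrib hY.aemeasurable] at h'

end CondQuasiIndep

lemma ae_mutuallyAC_comp_of_prodMkLeft_prodMkRight {α β γ : Type*} [MeasurableSpace α]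
    [MeasurableSpace β] [MeasurableSpace γ] [MeasurableSpace.CountablyGenerated α]
    {μ : Measure β} {ν : Measure γ} [IsProbabilityMeasure μ] [IsProbabilityMeasure ν]
    {κ : Kernel γ α} {η : Kernel β α} [IsFiniteKernel κ] [IsFiniteKernel η]
    (h : MutuallyAC (μ.prod ν ⊗ₘ Kernel.prodMkLeft β κ) (μ.prod ν ⊗ₘ Kernel.prodMkRight γ η)) :
    ∀ᵐ z ∂ν, MutuallyAC (κ z) (κ ∘ₘ ν) := by
  obtain ⟨y, hy⟩ := (Measure.ae_ae_of_ae_prod h.kernel_of_compProd).exists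
  filter_upwards [hy] with z hz using hz.trans (MutuallyAC.comp_of_ae hy).symm

/-- If `X` and `Y` are quasi-independent conditionally on `Z`, `X` and `Z` are
quasi-independent conditionally on `Y`, and `Y` and `Z` are quasi-independent, then
the joint law of `(X, Y, Z)` is mutually absolutely continuous with the product of
the three marginals. -/
theorem quasi_independence_of_pairwise
    {Ω α β γ : Type*}
    [MeasurableSpace Ω] [MeasurableSpace α] [MeasurableSpace β] [MeasurableSpace γ]
    [StandardBorelSpace α] [StandardBorelSpace β] [StandardBorelSpace γ]
    [Nonempty α] [Nonempty β] [Nonempty γ]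
    (P : Measure Ω) [IsProbabilityMeasure P]
    (X : Ω → α) (Y : Ω → β) (Z : Ω → γ)
    (hX : Measurable X) (hY : Measurable Y) (hZ : Measurable Z)
    (h1 : ∀ᵐ z ∂(P.map Z),
      MutuallyAC (condDistrib (fun ω => (X ω, Y ω)) Z P z)
        (((condDistrib (fun ω => (X ω, Y ω)) Z P z).map Prod.fst).prod
          ((condDistrib (fun ω => (X ω, Y ω)) Z P z).map Prod.snd)))
    (h2 : ∀ᵐ y ∂(P.map Y),
      MutuallyAC (condDistrib (fun ω => (X ω, Z ω)) Y P y)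
        (((condDistrib (fun ω => (X ω, Z ω)) Y P y).map Prod.fst).prod
          ((condDistrib (fun ω => (X ω, Z ω)) Y P y).map Prod.snd)))
    (h3 : MutuallyAC (P.map (fun ω => (Y ω, Z ω))) ((P.map Y).prod (P.map Z))) :
    MutuallyAC (P.map (fun ω => (X ω, Y ω, Z ω)))
      ((P.map X).prod ((P.map Y).prod (P.map Z))) := by
  have : IsProbabilityMeasure (P.map Y) := Measure.isProbabilityMeasure_map hY.aemeasurable
  have : IsProbabilityMeasure (P.map Z) := Measure.isProbabilityMeasure_map hZ.aemeasurable
  have hYZ : Measurable fun ω => (Y ω, Z ω) := hY.prodMk hZ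
  have hswap : Measurable (Prod.map (Prod.swap : γ × β → β × γ) (id : α → α)) := by fun_prop
  have hgivenZ : MutuallyAC (P.map fun ω => ((Y ω, Z ω), X ω))
      (P.map (fun ω => (Y ω, Z ω)) ⊗ₘ Kernel.prodMkLeft β (condDistrib X Z P)) := by
    have h := ((show CondQuasiIndep X Y Z P from h1).mutuallyAC_compProd_condDistrib
      hX hY hZ).map hswap
    rwa [map_prodMap_swap_compProd, Kernel.swapLeft_prodMkRight,
      Measure.map_map hswap (by fun_prop), Measure.map_map measurable_swap (by fun_prop)] at h
  have hgivenY : MutuallyAC (P.map fun ω => ((Y ω, Z ω), X ω))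
      (P.map (fun ω => (Y ω, Z ω)) ⊗ₘ Kernel.prodMkRight γ (condDistrib X Y P)) :=
    (show CondQuasiIndep X Z Y P from h2).mutuallyAC_compProd_condDistrib hX hZ hY
  have hXgivenZ : ∀ᵐ z ∂(P.map Z), MutuallyAC (condDistrib X Z P z) (P.map X) := by
    rw [← condDistrib_comp_map hZ.aemeasurable hX.aemeasurable]
    exact ae_mutuallyAC_comp_of_prodMkLeft_prodMkRight
      ((h3.symm.compProd_left _).trans ((hgivenZ.symm.trans hgivenY).trans (h3.compProd_left _)))
  have hproduct : MutuallyAC ((P.map Y).prod (P.map Z) ⊗ₘ Kernel.prodMkLeft β (condDistrib X Z P))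
      (((P.map Y).prod (P.map Z)).prod (P.map X)) := by
    rw [← Measure.compProd_const (μ := (P.map Y).prod (P.map Z))]
    exact MutuallyAC.compProd_right <| Measure.quasiMeasurePreserving_snd.ae hXgivenZ
  have h := ((hgivenZ.trans (h3.compProd_left _)).trans hproduct).map measurable_swap
  rwa [Measure.map_map measurable_swap (hYZ.prodMk hX), Measure.prod_swap] at h
end

section
/- Let $(\Omega, P)$ be a probability space and $X, Y, Z$ random variables with values in standard Borel spaces. Assume: (1) $X$ and $Y$ are independent conditionally on $Z$; (2) $X$ and $Z$ are independent conditionally on $Y$; and (3) $Y$ and $Z$ are independent. Then $X$, $Y$ and $Z$ are jointly independent. -/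
open MeasureTheory ProbabilityTheory

/-!
The conditional law of `(X, Y)` given `Z` is the product of the conditional laws of `X` and of `Y`
given `Z`, and the latter is the constant kernel `P.map Y` because `Y` and `Z` are independent.
Hence the law of `(Z, X, Y)` is the product of the laws of `(Z, X)` and of `Y`, i.e. `Y` is
independent of `(Z, X)`. Exchanging the roles of `Y` and `Z`, `Z` is independent of `(Y, X)`, in
particular of `X`, and these two independences factor the law of `(X, Y, Z)` on boxes.
-/

lemma MeasureTheory.Measure.compProd_prod_const_apply_prod {α β γ : Type*} [MeasurableSpace α]
    [MeasurableSpace β] [MeasurableSpace γ] (μ : Measure γ) [SFinite μ] (κ : Kernel γ α)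
    [IsSFiniteKernel κ] (ν : Measure β) [SFinite ν] {C : Set γ} {A : Set α} {B : Set β}
    (hC : MeasurableSet C) (hA : MeasurableSet A) (hB : MeasurableSet B) :
    (μ ⊗ₘ (κ ×ₖ Kernel.const γ ν)) (C ×ˢ A ×ˢ B) = (μ ⊗ₘ κ) (C ×ˢ A) * ν B := by
  simp only [Measure.compProd_apply_prod hC (hA.prod hB), Measure.compProd_apply_prod hC hA,
    Kernel.prod_apply_prod, Kernel.const_apply]
  exact lintegral_mul_const _ (κ.measurable_coe hA)

section

variable {Ω α β γ : Type*} [MeasurableSpace Ω] [MeasurableSpace α] [MeasurableSpace β]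
  [MeasurableSpace γ] {P : Measure Ω} [IsFiniteMeasure P] {X : Ω → α} {Y : Ω → β} {Z : Ω → γ}

lemma indepFun_iff_condDistrib_ae_eq_const [StandardBorelSpace β] [Nonempty β]
    (hX : AEMeasurable X P) (hY : AEMeasurable Y P) :
    IndepFun X Y P ↔ condDistrib Y X P =ᵐ[P.map X] Kernel.const α (P.map Y) := by
  rw [condDistrib_ae_eq_iff_measure_eq_compProd X hY, Measure.compProd_const,
    indepFun_iff_map_prod_eq_prod_map_map hX hY]

lemma map_prodMk_prodMk_eq_prod_of_indepFun (hX : Measurable X) (hY : Measurable Y)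
    (hZ : Measurable Z) (hZX_Y : IndepFun (fun ω => (Z ω, X ω)) Y P) (hXZ : IndepFun X Z P) :
    P.map (fun ω => (X ω, Y ω, Z ω)) = (P.map X).prod ((P.map Y).prod (P.map Z)) := by
  refine Measure.ext_prod₃ fun {A B C} hA hB hC => ?_
  rw [Measure.map_apply (hX.prodMk (hY.prodMk hZ)) (hA.prod (hB.prod hC)),
    Measure.prod_prod, Measure.prod_prod, Measure.map_apply hX hA, Measure.map_apply hY hB,
    Measure.map_apply hZ hC]
  calc P (_ ⁻¹' A ×ˢ B ×ˢ C)
      = P ((fun ω => (Z ω, X ω)) ⁻¹' (C ×ˢ A) ∩ Y ⁻¹' B) := by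
        congr 1; ext ω; simp only [Set.mem_preimage, Set.mem_prod, Set.mem_inter_iff]; tauto
    _ = P (X ⁻¹' A ∩ Z ⁻¹' C) * P (Y ⁻¹' B) := by
        rw [hZX_Y.measure_inter_preimage_eq_mul _ _ (hC.prod hA) hB, Set.mk_preimage_prod,
          Set.inter_comm]
    _ = P (X ⁻¹' A) * (P (Y ⁻¹' B) * P (Z ⁻¹' C)) := by
        rw [hXZ.measure_inter_preimage_eq_mul _ _ hA hC]; ring

variable [StandardBorelSpace α] [Nonempty α] [StandardBorelSpace β] [Nonempty β]

lemma condDistrib_prodMk_ae_eq_prod_condDistrib (hX : Measurable X) (hY : Measurable Y)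
    (h : ∀ᵐ z ∂(P.map Z),
      condDistrib (fun ω => (X ω, Y ω)) Z P z =
        ((condDistrib (fun ω => (X ω, Y ω)) Z P z).map Prod.fst).prod
          ((condDistrib (fun ω => (X ω, Y ω)) Z P z).map Prod.snd)) :
    condDistrib (fun ω => (X ω, Y ω)) Z P =ᵐ[P.map Z] condDistrib X Z P ×ₖ condDistrib Y Z P := by
  have hXY : AEMeasurable (fun ω => (X ω, Y ω)) P := (hX.prodMk hY).aemeasurable
  filter_upwards [h, condDistrib_comp Z hXY measurable_fst,
    condDistrib_comp Z hXY measurable_snd] with z hz hfst hsnd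
  rw [Kernel.prod_apply, hz, ← Kernel.map_apply _ measurable_fst,
    ← Kernel.map_apply _ measurable_snd, ← hfst, ← hsnd]
  rfl

lemma indepFun_prodMk_of_condDistrib_prodMk_ae_eq_prod (hX : Measurable X) (hY : Measurable Y)
    (hZ : Measurable Z)
    (h : condDistrib (fun ω => (X ω, Y ω)) Z P =ᵐ[P.map Z] condDistrib X Z P ×ₖ condDistrib Y Z P)
    (hZY : IndepFun Z Y P) :
    IndepFun (fun ω => (Z ω, X ω)) Y P := by
  rw [indepFun_iff_condDistrib_ae_eq_const hZ.aemeasurable hY.aemeasurable] at hZY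
  have hlaw : P.map (fun ω => (Z ω, X ω, Y ω)) =
      P.map Z ⊗ₘ (condDistrib X Z P ×ₖ Kernel.const γ (P.map Y)) := by
    rw [← compProd_map_condDistrib (hX.prodMk hY).aemeasurable]
    refine Measure.compProd_congr ?_
    filter_upwards [h, hZY] with z hz hz'
    rw [hz, Kernel.prod_apply, Kernel.prod_apply, hz']
  rw [indepFun_iff_map_prod_eq_prod_map_map (hZ.prodMk hX).aemeasurable hY.aemeasurable]
  refine Measure.ext_prod₃_iff'.2 fun {C A B} hC hA hB => ?_
  rw [Measure.prod_prod, ← compProd_map_condDistrib hX.aemeasurable,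
    ← Measure.compProd_prod_const_apply_prod _ _ _ hC hA hB, ← hlaw,
    Measure.map_apply ((hZ.prodMk hX).prodMk hY) ((hC.prod hA).prod hB),
    Measure.map_apply (hZ.prodMk (hX.prodMk hY)) (hC.prod (hA.prod hB))]
  congr 1
  ext ω
  simp only [Set.mem_preimage, Set.mem_prod, and_assoc]

end

/-- If `X` and `Y` are independent conditionally on `Z`, `X` and `Z` are independent
conditionally on `Y`, and `Y` and `Z` are independent, then `X`, `Y`, `Z` are jointly
independent: the law of `(X, Y, Z)` is the product of the three marginals. -/
theorem joint_independence_of_pairwise_conditional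
    {Ω α β γ : Type*}
    [MeasurableSpace Ω] [MeasurableSpace α] [MeasurableSpace β] [MeasurableSpace γ]
    [StandardBorelSpace α] [StandardBorelSpace β] [StandardBorelSpace γ]
    [Nonempty α] [Nonempty β] [Nonempty γ]
    (P : Measure Ω) [IsProbabilityMeasure P]
    (X : Ω → α) (Y : Ω → β) (Z : Ω → γ)
    (hX : Measurable X) (hY : Measurable Y) (hZ : Measurable Z)
    (h1 : ∀ᵐ z ∂(P.map Z),
      condDistrib (fun ω => (X ω, Y ω)) Z P z =
        ((condDistrib (fun ω => (X ω, Y ω)) Z P z).map Prod.fst).prod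
          ((condDistrib (fun ω => (X ω, Y ω)) Z P z).map Prod.snd))
    (h2 : ∀ᵐ y ∂(P.map Y),
      condDistrib (fun ω => (X ω, Z ω)) Y P y =
        ((condDistrib (fun ω => (X ω, Z ω)) Y P y).map Prod.fst).prod
          ((condDistrib (fun ω => (X ω, Z ω)) Y P y).map Prod.snd))
    (h3 : P.map (fun ω => (Y ω, Z ω)) = (P.map Y).prod (P.map Z)) :
    P.map (fun ω => (X ω, Y ω, Z ω)) = (P.map X).prod ((P.map Y).prod (P.map Z)) := by
  have hYZ : IndepFun Y Z P :=
    (indepFun_iff_map_prod_eq_prod_map_map hY.aemeasurable hZ.aemeasurable).2 h3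
  have hZX_Y : IndepFun (fun ω => (Z ω, X ω)) Y P :=
    indepFun_prodMk_of_condDistrib_prodMk_ae_eq_prod hX hY hZ
      (condDistrib_prodMk_ae_eq_prod_condDistrib hX hY h1) hYZ.symm
  have hYX_Z : IndepFun (fun ω => (Y ω, X ω)) Z P :=
    indepFun_prodMk_of_condDistrib_prodMk_ae_eq_prod hX hZ hY
      (condDistrib_prodMk_ae_eq_prod_condDistrib hX hZ h2) hYZ
  exact map_prodMk_prodMk_eq_prod_of_indepFun hX hY hZ hZX_Y
    (hYX_Z.comp measurable_snd measurable_id)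
end
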